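/- arXiv:2112.08339 — 3 statements merged into one kernel-verified Lean document; each statement's English description precedes it below -/
import Mathlib

section
/- Let R be an irreducible bi-L-matrix on index set I (row sums and column sums are zero). Let R₀ denote the restriction of R to the subspace of vectors with zero coordinate sum, which is invertible. Then for any distinct i, j ∈ I, the scalar product ⟨(𝟙_i − 𝟙_j), R₀⁻¹(𝟙_i − 𝟙_j)⟩ is strictly positive. -/
/-!
Expanding the squares and using that both the row and the column sums of `R` vanish gives
`2 ⟨v, R v⟩ = -∑ₖ∑ₗ R k l (v k - v l)²`. As the off-diagonal entries are nonpositive, every term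
of the double sum is nonpositive, so the quadratic form is nonnegative; it vanishes only if `v` is
constant along every negative entry of `R`, hence, by irreducibility, constant, hence zero on the
zero-sum hyperplane `C₀`. So `R₀ : C₀ → C₀` is injective, hence invertible, and for `u = 𝟙ᵢ - 𝟙ⱼ`
we get `⟨u, R₀⁻¹ u⟩ = ⟨v, R v⟩ > 0` with `v = R₀⁻¹ u ≠ 0`.
-/

open Matrix

theorem apply_eq_of_chain {I α : Type*} {r : I → I → Prop} (v : I → α)
    (hv : ∀ k l, r k l → v k = v l) {m : ℕ} (p : Fin (m + 1) → I)
    (hp : ∀ k : Fin m, r (p k.castSucc) (p k.succ)) : v (p 0) = v (p (Fin.last m)) := by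
  induction (Fin.last m) using Fin.induction with
  | zero => rfl
  | succ k ih => exact ih.trans (hv _ _ (hp k))

def zeroSumSubmodule (I : Type*) [Fintype I] : Submodule ℝ (I → ℝ) where
  carrier := {f | ∑ k, f k = 0}
  add_mem' {f g} hf hg := by simp_all [Finset.sum_add_distrib]
  zero_mem' := by simp
  smul_mem' c f hf := by simp_all [← Finset.mul_sum]

namespace Matrix

/-- Irreducibility of an L-matrix. -/
def NegEntryStronglyConnected {I : Type*} (R : Matrix I I ℝ) : Prop :=
  ∀ i j : I, ∃ (m : ℕ) (p : Fin (m + 1) → I),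
    p 0 = i ∧ p (Fin.last m) = j ∧ ∀ k : Fin m, R (p k.castSucc) (p k.succ) < 0

theorem sum_mulVec_eq_zero_of_sum_col_eq_zero {I α : Type*} [Fintype I]
    [NonUnitalNonAssocSemiring α] (R : Matrix I I α) (hcol : ∀ j, ∑ i, R i j = 0) (v : I → α) :
    ∑ k, (R *ᵥ v) k = 0 := by
  simp only [mulVec, dotProduct]
  rw [Finset.sum_comm]
  simp [← Finset.sum_mul, hcol]

theorem two_mul_dotProduct_mulVec_self {I α : Type*} [Fintype I] [CommRing α]
    (R : Matrix I I α) (hrow : ∀ i, ∑ j, R i j = 0) (hcol : ∀ j, ∑ i, R i j = 0) (v : I → α) :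
    2 * (v ⬝ᵥ R *ᵥ v) = -∑ k, ∑ l, R k l * (v k - v l) ^ 2 := by
  have hrow' : ∑ k, ∑ l, R k l * v k ^ 2 = 0 := by
    simp [← Finset.sum_mul, hrow]
  have hcol' : ∑ k, ∑ l, R k l * v l ^ 2 = 0 := by
    rw [Finset.sum_comm]
    simp [← Finset.sum_mul, hcol]
  have hexpand : ∑ k, ∑ l, R k l * (v k - v l) ^ 2 = ∑ k, ∑ l, R k l * v k ^ 2
      + ∑ k, ∑ l, R k l * v l ^ 2 - 2 * (v ⬝ᵥ R *ᵥ v) := by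
    simp only [dotProduct, mulVec, Finset.mul_sum, ← Finset.sum_add_distrib,
      ← Finset.sum_sub_distrib]
    exact Finset.sum_congr rfl fun k _ => Finset.sum_congr rfl fun l _ => by ring
  linear_combination hexpand + hrow' + hcol'

theorem mul_sub_sq_nonpos {I : Type*} (R : Matrix I I ℝ) (hoff : ∀ i j, i ≠ j → R i j ≤ 0)
    (v : I → ℝ) (k l : I) : R k l * (v k - v l) ^ 2 ≤ 0 := by
  rcases eq_or_ne k l with rfl | hkl
  · simp
  · exact mul_nonpos_of_nonpos_of_nonneg (hoff k l hkl) (sq_nonneg _)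

variable {I : Type*} [Fintype I] (R : Matrix I I ℝ)

theorem dotProduct_mulVec_self_nonneg (hoff : ∀ i j, i ≠ j → R i j ≤ 0)
    (hrow : ∀ i, ∑ j, R i j = 0) (hcol : ∀ j, ∑ i, R i j = 0) (v : I → ℝ) :
    0 ≤ v ⬝ᵥ R *ᵥ v := by
  have : ∑ k, ∑ l, R k l * (v k - v l) ^ 2 ≤ 0 :=
    Finset.sum_nonpos fun k _ => Finset.sum_nonpos fun l _ => mul_sub_sq_nonpos R hoff v k l
  linarith [two_mul_dotProduct_mulVec_self R hrow hcol v]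

theorem apply_eq_of_dotProduct_mulVec_self_eq_zero (hoff : ∀ i j, i ≠ j → R i j ≤ 0)
    (hrow : ∀ i, ∑ j, R i j = 0) (hcol : ∀ j, ∑ i, R i j = 0) {v : I → ℝ}
    (hq : v ⬝ᵥ R *ᵥ v = 0) {k l : I} (hkl : R k l < 0) : v k = v l := by
  have hsum : ∑ k, ∑ l, R k l * (v k - v l) ^ 2 = 0 := by
    linarith [two_mul_dotProduct_mulVec_self R hrow hcol v]
  have hrow_k := (Finset.sum_eq_zero_iff_of_nonpos fun k _ =>
    Finset.sum_nonpos fun l _ => mul_sub_sq_nonpos R hoff v k l).mp hsum k (Finset.mem_univ k)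
  have hterm := (Finset.sum_eq_zero_iff_of_nonpos fun l _ =>
    mul_sub_sq_nonpos R hoff v k l).mp hrow_k l (Finset.mem_univ l)
  have hsq : (v k - v l) ^ 2 = 0 := (mul_eq_zero.mp hterm).resolve_left hkl.ne
  exact sub_eq_zero.mp (pow_eq_zero_iff two_ne_zero |>.mp hsq)

theorem dotProduct_mulVec_self_pos (hoff : ∀ i j, i ≠ j → R i j ≤ 0)
    (hrow : ∀ i, ∑ j, R i j = 0) (hcol : ∀ j, ∑ i, R i j = 0)
    (hirr : R.NegEntryStronglyConnected) {v : I → ℝ} (hsum : ∑ k, v k = 0) (hv : v ≠ 0) :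
    0 < v ⬝ᵥ R *ᵥ v := by
  refine (dotProduct_mulVec_self_nonneg R hoff hrow hcol v).lt_of_ne' fun hq => hv ?_
  have hconst (a b : I) : v a = v b := by
    obtain ⟨m, p, rfl, rfl, hp⟩ := hirr a b
    exact apply_eq_of_chain v
      (fun _ _ => apply_eq_of_dotProduct_mulVec_self_eq_zero R hoff hrow hcol hq) p hp
  funext a
  have hcard_mul : (Fintype.card I : ℝ) * v a = 0 := by
    rw [← hsum, ← nsmul_eq_mul, ← Finset.card_univ, ← Finset.sum_const]
    exact Finset.sum_congr rfl fun k _ => hconst a k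
  have hcard : (Fintype.card I : ℝ) ≠ 0 := by
    exact_mod_cast (Fintype.card_pos_iff.mpr ⟨a⟩).ne'
  exact (mul_eq_zero.mp hcard_mul).resolve_left hcard

def restrictZeroSum (hcol : ∀ j, ∑ i, R i j = 0) :
    zeroSumSubmodule I →ₗ[ℝ] zeroSumSubmodule I :=
  R.mulVecLin.restrict fun v _ => sum_mulVec_eq_zero_of_sum_col_eq_zero R hcol v

@[simp]
theorem coe_restrictZeroSum_apply (hcol : ∀ j, ∑ i, R i j = 0) (v : zeroSumSubmodule I) :
    (R.restrictZeroSum hcol v : I → ℝ) = R *ᵥ v :=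
  rfl

theorem bijective_restrictZeroSum (hoff : ∀ i j, i ≠ j → R i j ≤ 0)
    (hrow : ∀ i, ∑ j, R i j = 0) (hcol : ∀ j, ∑ i, R i j = 0)
    (hirr : R.NegEntryStronglyConnected) : Function.Bijective (R.restrictZeroSum hcol) := by
  have hinj : Function.Injective (R.restrictZeroSum hcol) := by
    rw [← LinearMap.ker_eq_bot, LinearMap.ker_eq_bot']
    rintro ⟨v, hsum⟩ hRv
    by_contra hv
    have hpos := dotProduct_mulVec_self_pos R hoff hrow hcol hirr hsum fun h => hv (by simp [h])
    have hRv' : R *ᵥ v = 0 := by simpa using congrArg Subtype.val hRv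
    simp [hRv'] at hpos
  exact ⟨hinj, LinearMap.injective_iff_surjective.mp hinj⟩

end Matrix

theorem stmt1_general (I : Type*) [Fintype I] [DecidableEq I] (R : Matrix I I ℝ)
    (hoff : ∀ i j, i ≠ j → R i j ≤ 0)
    (hrow : ∀ i, ∑ j, R i j = 0)
    (hcol : ∀ j, ∑ i, R i j = 0)
    (hirr : ∀ i j : I, ∃ (m : ℕ) (p : Fin (m + 1) → I),
      p 0 = i ∧ p (Fin.last m) = j ∧ ∀ k : Fin m, R (p k.castSucc) (p k.succ) < 0)
    (i j : I) (hij : i ≠ j) :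
    ∃ v : I → ℝ, (∑ k, v k = 0) ∧
      R.mulVec v = (fun k => (if k = i then (1 : ℝ) else 0) - (if k = j then 1 else 0)) ∧
      (∀ w : I → ℝ, (∑ k, w k = 0) →
        R.mulVec w = (fun k => (if k = i then (1 : ℝ) else 0) - (if k = j then 1 else 0)) →
        w = v) ∧
      0 < ∑ k, ((if k = i then (1 : ℝ) else 0) - (if k = j then 1 else 0)) * v k := by
  set u : I → ℝ := fun k => (if k = i then (1 : ℝ) else 0) - (if k = j then 1 else 0)
  have hu : u ∈ zeroSumSubmodule I := by
    simp [zeroSumSubmodule, u, Finset.sum_sub_distrib]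
  have hu_ne : u ≠ 0 := fun h => by simpa [u, hij] using congrFun h i
  obtain ⟨hinj, hsurj⟩ := R.bijective_restrictZeroSum hoff hrow hcol hirr
  obtain ⟨⟨v, hv⟩, hRv⟩ := hsurj ⟨u, hu⟩
  have hRv : R *ᵥ v = u := by simpa using congrArg Subtype.val hRv
  refine ⟨v, hv, hRv, fun w hw hRw => ?_, ?_⟩
  · have := @hinj ⟨w, hw⟩ ⟨v, hv⟩ (Subtype.ext (by simpa using hRw.trans hRv.symm))
    exact congrArg Subtype.val this
  · have hv_ne : v ≠ 0 := by
      rintro rfl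
      exact hu_ne (by simpa using hRv.symm)
    have hpos := R.dotProduct_mulVec_self_pos hoff hrow hcol hirr hv hv_ne
    rwa [hRv, dotProduct_comm] at hpos

/-- Let `R` be an irreducible bi-L-matrix on a finite index set `I` (nonnegative
diagonal, nonpositive off-diagonal entries, zero row and column sums, strongly connected
negative-entry graph).  Its restriction `R₀` to the zero-sum hyperplane is invertible, and for any
distinct `i, j`, the scalar product `⟨𝟙_i − 𝟙_j, R₀⁻¹(𝟙_i − 𝟙_j)⟩` is strictly positive.  We state
this as: there exists a zero-sum vector `v` with `R v = 𝟙_i − 𝟙_j` (unique, by invertibility of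
`R₀`), and `⟨𝟙_i − 𝟙_j, v⟩ > 0`. -/
theorem stmt1 (I : Type*) [Fintype I] [DecidableEq I] (R : Matrix I I ℝ)
    (hdiag : ∀ i, 0 ≤ R i i)
    (hoff : ∀ i j, i ≠ j → R i j ≤ 0)
    (hrow : ∀ i, ∑ j, R i j = 0)
    (hcol : ∀ j, ∑ i, R i j = 0)
    (hirr : ∀ i j : I, ∃ (m : ℕ) (p : Fin (m + 1) → I),
      p 0 = i ∧ p (Fin.last m) = j ∧ ∀ k : Fin m, R (p k.castSucc) (p k.succ) < 0)
    (i j : I) (hij : i ≠ j) :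
    ∃ v : I → ℝ, (∑ k, v k = 0) ∧
      R.mulVec v = (fun k => (if k = i then (1 : ℝ) else 0) - (if k = j then 1 else 0)) ∧
      (∀ w : I → ℝ, (∑ k, w k = 0) →
        R.mulVec w = (fun k => (if k = i then (1 : ℝ) else 0) - (if k = j then 1 else 0)) →
        w = v) ∧
      0 < ∑ k, ((if k = i then (1 : ℝ) else 0) - (if k = j then 1 else 0)) * v k :=
  stmt1_general I R hoff hrow hcol hirr i j hij
end

section
/- For every N ≥ 1 there exist a neighbourhood U of 0 in the space of N×N complex matrices and a constant C > 0 such that for all A, B ∈ U, ‖log(e^A e^B) − A − B‖ ≤ C‖[A,B]‖, where [A,B] = AB − BA and log is the matrix logarithm. -/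
/-!
Along `t ↦ exp (t a) exp (t b) exp ((1 - t) (a + b))` the derivative is
`exp (t a) [a, exp (t b)] exp ((1 - t) (a + b))`, and comparing the exponential series term by term
gives `‖[a, exp y]‖ ≤ exp ‖y‖ ‖[a, y]‖`. The mean value theorem therefore bounds
`‖exp a exp b - exp (a + b)‖` by a multiple of `‖[a, b]‖`. Near `1` the logarithm series is
Lipschitz, and `log (exp x) = x` for small `x`, since `log (exp (t x))` and `t x` have the same
derivative `x` in `t`. Hence `‖log (exp a exp b) - a - b‖ = ‖log (exp a exp b) - log (exp (a + b))‖`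
is again `O(‖[a, b]‖)`.
-/

/-- The (principal) matrix logarithm, defined near the identity by the power series
`log M = ∑_{k≥0} (−1)^k (M − 1)^{k+1} / (k+1)`. -/
noncomputable def matrixLog {N : ℕ} (M : Matrix (Fin N) (Fin N) ℂ) : Matrix (Fin N) (Fin N) ℂ :=
  ∑' k : ℕ, ((-1 : ℂ) ^ k / (k + 1)) • (M - 1) ^ (k + 1)

open scoped Nat

section NormedRing

variable {𝔸 : Type*} [NormedRing 𝔸]

theorem norm_pow_succ_sub_pow_succ_le {x y : 𝔸} {r : ℝ} (hx : ‖x‖ ≤ r) (hy : ‖y‖ ≤ r)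
    (n : ℕ) : ‖x ^ (n + 1) - y ^ (n + 1)‖ ≤ (n + 1) * r ^ n * ‖x - y‖ := by
  induction n with
  | zero => simp
  | succ n ih =>
    have hr : 0 ≤ r := (norm_nonneg x).trans hx
    have hy' : ‖y ^ (n + 1)‖ ≤ r ^ (n + 1) :=
      (norm_pow_le' y n.succ_pos).trans (pow_le_pow_left₀ (norm_nonneg y) hy _)
    calc ‖x ^ (n + 2) - y ^ (n + 2)‖
        = ‖x * (x ^ (n + 1) - y ^ (n + 1)) + (x - y) * y ^ (n + 1)‖ := by
          rw [pow_succ' x, pow_succ' y]; noncomm_ring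
      _ ≤ ‖x‖ * ‖x ^ (n + 1) - y ^ (n + 1)‖ + ‖x - y‖ * ‖y ^ (n + 1)‖ :=
          (norm_add_le _ _).trans (add_le_add (norm_mul_le _ _) (norm_mul_le _ _))
      _ ≤ r * ((n + 1) * r ^ n * ‖x - y‖) + ‖x - y‖ * r ^ (n + 1) := by gcongr
      _ = (↑(n + 1) + 1) * r ^ (n + 1) * ‖x - y‖ := by push_cast; ring

theorem norm_mul_pow_succ_sub_pow_succ_mul_le (a b : 𝔸) (n : ℕ) :
    ‖a * b ^ (n + 1) - b ^ (n + 1) * a‖ ≤ (n + 1) * ‖b‖ ^ n * ‖a * b - b * a‖ := by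
  induction n with
  | zero => simp
  | succ n ih =>
    calc ‖a * b ^ (n + 2) - b ^ (n + 2) * a‖
        = ‖(a * b ^ (n + 1) - b ^ (n + 1) * a) * b + b ^ (n + 1) * (a * b - b * a)‖ := by
          rw [pow_succ b (n + 1)]; noncomm_ring
      _ ≤ ‖a * b ^ (n + 1) - b ^ (n + 1) * a‖ * ‖b‖ + ‖b‖ ^ (n + 1) * ‖a * b - b * a‖ :=
          (norm_add_le _ _).trans (add_le_add (norm_mul_le _ _)
            ((norm_mul_le _ _).trans (by gcongr; exact norm_pow_le' b n.succ_pos)))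
      _ ≤ (n + 1) * ‖b‖ ^ n * ‖a * b - b * a‖ * ‖b‖ + ‖b‖ ^ (n + 1) * ‖a * b - b * a‖ := by
          gcongr
      _ = (↑(n + 1) + 1) * ‖b‖ ^ (n + 1) * ‖a * b - b * a‖ := by push_cast; ring

theorem hasDerivAt_pow_succ_of_commute {𝕂 : Type*} [NontriviallyNormedField 𝕂]
    [NormedAlgebra 𝕂 𝔸] {u : 𝕂 → 𝔸} {w : 𝔸} {t : 𝕂} (hu : HasDerivAt u w t)
    (hc : Commute (u t) w) (n : ℕ) :
    HasDerivAt (fun s => u s ^ (n + 1)) ((n + 1) • (u t ^ n * w)) t := by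
  induction n with
  | zero => simpa using hu
  | succ n ih =>
    refine ((hu.mul ih).congr_deriv ?_).congr_of_eventuallyEq
      (Filter.Eventually.of_forall fun s => pow_succ' (u s) (n + 1))
    rw [(hc.symm.pow_right (n + 1)).eq, mul_smul_comm, ← mul_assoc, ← pow_succ',
      ← succ_nsmul' _ (n + 1)]

end NormedRing

namespace NormedSpace

section Exp

variable {𝔸 : Type*} [NormedRing 𝔸] [CompleteSpace 𝔸]

theorem norm_exp_sub_one_le (𝕂 : Type*) [RCLike 𝕂] [NormedAlgebra 𝕂 𝔸] (x : 𝔸) :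
    ‖exp x - 1‖ ≤ Real.exp ‖x‖ - 1 := by
  have hA : HasSum (fun n => ((n + 1)! : 𝕂)⁻¹ • x ^ (n + 1)) (exp x - 1) := by
    simpa using (hasSum_nat_add_iff' 1).2 (exp_series_hasSum_exp' (𝕂 := 𝕂) x)
  have hR : HasSum (fun n => ‖x‖ ^ (n + 1) / (n + 1)!) (Real.exp ‖x‖ - 1) := by
    simpa [Real.exp_eq_exp_ℝ] using (hasSum_nat_add_iff' 1).2 (expSeries_div_hasSum_exp ‖x‖)
  refine hA.norm_le_of_bounded hR fun n => ?_
  rw [norm_smul, norm_inv, RCLike.norm_natCast, inv_mul_eq_div]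
  gcongr
  exact norm_pow_le' x n.succ_pos

theorem norm_exp_le (𝕂 : Type*) [RCLike 𝕂] [NormedAlgebra 𝕂 𝔸] [NormOneClass 𝔸] (x : 𝔸) :
    ‖exp x‖ ≤ Real.exp ‖x‖ := by
  have := norm_exp_sub_one_le 𝕂 x
  have := norm_sub_norm_le (exp x) 1
  rw [norm_one] at this
  linarith

theorem norm_exp_mul_exp_sub_one_le (𝕂 : Type*) [RCLike 𝕂] [NormedAlgebra 𝕂 𝔸] (x y : 𝔸) :
    ‖exp x * exp y - 1‖ ≤ Real.exp (‖x‖ + ‖y‖) - 1 := by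
  have hx := norm_exp_sub_one_le 𝕂 x
  have hy := norm_exp_sub_one_le 𝕂 y
  calc ‖exp x * exp y - 1‖
      = ‖(exp x - 1) * (exp y - 1) + (exp x - 1) + (exp y - 1)‖ := by noncomm_ring
    _ ≤ ‖exp x - 1‖ * ‖exp y - 1‖ + ‖exp x - 1‖ + ‖exp y - 1‖ :=
        norm_add₃_le.trans (by gcongr; exact norm_mul_le _ _)
    _ ≤ (Real.exp ‖x‖ - 1) * (Real.exp ‖y‖ - 1) + (Real.exp ‖x‖ - 1) + (Real.exp ‖y‖ - 1) := by
        gcongr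
        exact (norm_nonneg _).trans hx
    _ = Real.exp (‖x‖ + ‖y‖) - 1 := by rw [Real.exp_add]; ring

theorem norm_mul_exp_sub_exp_mul_le (𝕂 : Type*) [RCLike 𝕂] [NormedAlgebra 𝕂 𝔸] (a b : 𝔸) :
    ‖a * exp b - exp b * a‖ ≤ Real.exp ‖b‖ * ‖a * b - b * a‖ := by
  have hexp := exp_series_hasSum_exp' (𝕂 := 𝕂) b
  have hA : HasSum (fun n => ((n + 1)! : 𝕂)⁻¹ • (a * b ^ (n + 1) - b ^ (n + 1) * a))
      (a * exp b - exp b * a) := by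
    have := (hexp.mul_left a).sub (hexp.mul_right a)
    simp only [mul_smul_comm, smul_mul_assoc, ← smul_sub] at this
    simpa using (hasSum_nat_add_iff' 1).2 this
  have hR : HasSum (fun n => ‖b‖ ^ n / n ! * ‖a * b - b * a‖)
      (Real.exp ‖b‖ * ‖a * b - b * a‖) := by
    simpa [Real.exp_eq_exp_ℝ] using (expSeries_div_hasSum_exp ‖b‖).mul_right ‖a * b - b * a‖
  refine hA.norm_le_of_bounded hR fun n => ?_
  rw [norm_smul, norm_inv, RCLike.norm_natCast]
  calc ((n + 1)! : ℝ)⁻¹ * ‖a * b ^ (n + 1) - b ^ (n + 1) * a‖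
      ≤ ((n + 1)! : ℝ)⁻¹ * ((n + 1) * ‖b‖ ^ n * ‖a * b - b * a‖) := by
        gcongr; exact norm_mul_pow_succ_sub_pow_succ_mul_le a b n
    _ = ‖b‖ ^ n / n ! * ‖a * b - b * a‖ := by
        rw [Nat.factorial_succ]; push_cast; field_simp

theorem hasDerivAt_exp_smul_mul_exp_smul_mul_exp_smul (𝕂 : Type*) [RCLike 𝕂]
    [NormedAlgebra 𝕂 𝔸] (a b : 𝔸) (t : 𝕂) :
    HasDerivAt (fun s : 𝕂 => exp (s • a) * exp (s • b) * exp ((1 - s) • (a + b)))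
      (exp (t • a) * (a * exp (t • b) - exp (t • b) * a) * exp ((1 - t) • (a + b))) t := by
  have hc : HasDerivAt (fun s : 𝕂 => exp ((1 - s) • (a + b)))
      (-((a + b) * exp ((1 - t) • (a + b)))) t := by
    simpa only [Function.comp_def, neg_smul, one_smul] using
      (hasDerivAt_exp_smul_const' (a + b) (1 - t)).scomp t ((hasDerivAt_id t).const_sub 1)
  refine (((hasDerivAt_exp_smul_const a t).mul (hasDerivAt_exp_smul_const b t)).mul
    hc).congr_deriv ?_
  simp only [Pi.mul_apply]
  noncomm_ring

theorem norm_exp_mul_exp_sub_exp_add_le (𝕂 : Type*) [RCLike 𝕂] [NormedAlgebra 𝕂 𝔸]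
    [NormOneClass 𝔸] (a b : 𝔸) :
    ‖exp a * exp b - exp (a + b)‖ ≤ Real.exp (2 * (‖a‖ + ‖b‖)) * ‖a * b - b * a‖ := by
  let s : Set 𝕂 := Metric.closedBall 0 1 ∩ Metric.closedBall 1 1
  have hs : Convex ℝ s := (convex_closedBall _ _).inter (convex_closedBall _ _)
  have hbound : ∀ t ∈ s,
      ‖exp (t • a) * (a * exp (t • b) - exp (t • b) * a) * exp ((1 - t) • (a + b))‖ ≤
        Real.exp (2 * (‖a‖ + ‖b‖)) * ‖a * b - b * a‖ := by
    rintro t ⟨ht, ht'⟩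
    rw [mem_closedBall_zero_iff] at ht
    rw [Metric.mem_closedBall, dist_eq_norm, ← norm_neg, neg_sub] at ht'
    have hsmul : ∀ {r : 𝕂} (x : 𝔸), ‖r‖ ≤ 1 → ‖r • x‖ ≤ ‖x‖ := fun x hr => by
      rw [norm_smul]; exact mul_le_of_le_one_left (norm_nonneg x) hr
    have h₁ : ‖exp (t • a)‖ ≤ Real.exp ‖a‖ :=
      (norm_exp_le 𝕂 _).trans (Real.exp_le_exp.2 (hsmul a ht))
    have h₂ : ‖a * exp (t • b) - exp (t • b) * a‖ ≤ Real.exp ‖b‖ * ‖a * b - b * a‖ :=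
      calc ‖a * exp (t • b) - exp (t • b) * a‖
          ≤ Real.exp ‖t • b‖ * ‖a * (t • b) - (t • b) * a‖ := norm_mul_exp_sub_exp_mul_le 𝕂 a _
        _ = Real.exp ‖t • b‖ * ‖t • (a * b - b * a)‖ := by
          rw [mul_smul_comm, smul_mul_assoc, smul_sub]
        _ ≤ Real.exp ‖b‖ * ‖a * b - b * a‖ := by
          gcongr <;> exact hsmul _ ht
    have h₃ : ‖exp ((1 - t) • (a + b))‖ ≤ Real.exp (‖a‖ + ‖b‖) :=
      (norm_exp_le 𝕂 _).trans (Real.exp_le_exp.2 ((hsmul _ ht').trans (norm_add_le a b)))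
    calc _ ≤ _ := norm_mul₃_le
      _ ≤ Real.exp ‖a‖ * (Real.exp ‖b‖ * ‖a * b - b * a‖) * Real.exp (‖a‖ + ‖b‖) := by
          gcongr
      _ = Real.exp (2 * (‖a‖ + ‖b‖)) * ‖a * b - b * a‖ := by
          simp only [two_mul, Real.exp_add]; ring
  have h := hs.norm_image_sub_le_of_norm_hasDerivWithin_le
    (fun t _ => (hasDerivAt_exp_smul_mul_exp_smul_mul_exp_smul 𝕂 a b t).hasDerivWithinAt) hbound
    (x := 0) (y := 1) (by simp [s]) (by simp [s])
  simpa using h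

end Exp

section Log

variable (𝕂 : Type*) {𝔸 : Type*} [RCLike 𝕂] [NormedRing 𝔸] [NormedAlgebra 𝕂 𝔸]
  [CompleteSpace 𝔸]

noncomputable def logSeries (x : 𝔸) : 𝔸 :=
  ∑' k : ℕ, ((-1 : 𝕂) ^ k / (k + 1)) • (x - 1) ^ (k + 1)

theorem norm_neg_one_pow_div_succ (k : ℕ) : ‖(-1 : 𝕂) ^ k / (k + 1)‖ = ((k : ℝ) + 1)⁻¹ := by
  rw [norm_div, norm_pow, norm_neg, norm_one, one_pow, one_div, ← Nat.cast_succ,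
    RCLike.norm_natCast, Nat.cast_succ]

theorem summable_logSeries {x : 𝔸} (hx : ‖x - 1‖ < 1) :
    Summable fun k : ℕ => ((-1 : 𝕂) ^ k / (k + 1)) • (x - 1) ^ (k + 1) := by
  refine .of_norm_bounded ((summable_geometric_of_lt_one (norm_nonneg _) hx).mul_left ‖x - 1‖)
    fun k => ?_
  rw [norm_smul, norm_neg_one_pow_div_succ, ← pow_succ']
  calc ((k : ℝ) + 1)⁻¹ * ‖(x - 1) ^ (k + 1)‖ ≤ 1 * ‖x - 1‖ ^ (k + 1) := by
        gcongr
        · exact inv_le_one_of_one_le₀ (by linarith [k.cast_nonneg (α := ℝ)])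
        · exact norm_pow_le' _ k.succ_pos
    _ = ‖x - 1‖ ^ (k + 1) := one_mul _

theorem norm_logSeries_sub_logSeries_le {x y : 𝔸} {r : ℝ} (hx : ‖x - 1‖ ≤ r)
    (hy : ‖y - 1‖ ≤ r) (hr : r < 1) :
    ‖logSeries 𝕂 x - logSeries 𝕂 y‖ ≤ (1 - r)⁻¹ * ‖x - y‖ := by
  have hsum := (summable_logSeries 𝕂 (hx.trans_lt hr)).hasSum.sub
    (summable_logSeries 𝕂 (hy.trans_lt hr)).hasSum
  simp only [← smul_sub] at hsum
  refine hsum.norm_le_of_bounded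
    ((hasSum_geometric_of_lt_one ((norm_nonneg _).trans hx) hr).mul_right ‖x - y‖) fun k => ?_
  rw [norm_smul, norm_neg_one_pow_div_succ]
  calc ((k : ℝ) + 1)⁻¹ * ‖(x - 1) ^ (k + 1) - (y - 1) ^ (k + 1)‖
      ≤ ((k : ℝ) + 1)⁻¹ * ((k + 1) * r ^ k * ‖(x - 1) - (y - 1)‖) := by
        gcongr; exact norm_pow_succ_sub_pow_succ_le hx hy k
    _ = r ^ k * ‖x - y‖ := by
        rw [sub_sub_sub_cancel_right]; field_simp

theorem logSeries_exp [NormOneClass 𝔸] {x : 𝔸} (hx : ‖x‖ < Real.log 2) :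
    logSeries 𝕂 (exp x) = x := by
  -- an open ball around `[0, 1]` on which the termwise derivatives are uniformly summable
  obtain ⟨ρ, hρ, hρx⟩ : ∃ ρ : ℝ, 1 < ρ ∧ ρ * ‖x‖ < Real.log 2 := by
    obtain ⟨c, hxc, hc⟩ := exists_between hx
    have hc₀ : 0 < c := (norm_nonneg x).trans_lt hxc
    refine ⟨Real.log 2 / c, (one_lt_div hc₀).2 hc, ?_⟩
    calc Real.log 2 / c * ‖x‖ < Real.log 2 / c * c :=
          mul_lt_mul_of_pos_left hxc (div_pos (hc₀.trans hc) hc₀)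
      _ = Real.log 2 := div_mul_cancel₀ _ hc₀.ne'
  set q := Real.exp (ρ * ‖x‖) - 1
  have hq : q < 1 := by linarith [(Real.lt_log_iff_exp_lt two_pos).1 hρx]
  set S := Metric.ball (0 : 𝕂) ρ
  have hS : ∀ t ∈ S, ‖exp (t • x) - 1‖ ≤ q ∧ ‖exp (t • x)‖ ≤ Real.exp (ρ * ‖x‖) := by
    intro t ht
    have htx : ‖t • x‖ ≤ ρ * ‖x‖ := by
      rw [norm_smul]
      exact mul_le_mul_of_nonneg_right (mem_ball_zero_iff.1 ht).le (norm_nonneg _)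
    exact ⟨(norm_exp_sub_one_le 𝕂 _).trans (sub_le_sub_right (Real.exp_le_exp.2 htx) 1),
      (norm_exp_le 𝕂 _).trans (Real.exp_le_exp.2 htx)⟩
  have h0S : (0 : 𝕂) ∈ S := Metric.mem_ball_self (zero_lt_one.trans hρ)
  have h1S : (1 : 𝕂) ∈ S := by simpa [S] using hρ
  have hq₀ : 0 ≤ q := (norm_nonneg _).trans (hS 0 h0S).1
  let g : ℕ → 𝕂 → 𝔸 := fun k t => ((-1 : 𝕂) ^ k / (k + 1)) • (exp (t • x) - 1) ^ (k + 1)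
  -- `g' k t` is the `k`-th term of `exp (t • x)⁻¹ * (exp (t • x) * x)`, expanding the inverse
  -- as a geometric series in `1 - exp (t • x)`
  let g' : ℕ → 𝕂 → 𝔸 := fun k t => (-(exp (t • x) - 1)) ^ k * (exp (t • x) * x)
  have hg : ∀ k t, HasDerivAt (g k) (g' k t) t := by
    intro k t
    have hcomm : Commute (exp (t • x) - 1) (exp (t • x) * x) :=
      ((Commute.refl _).sub_left (Commute.one_left _)).mul_right
        ((((Commute.refl x).smul_right t).exp_right).symm.sub_left (Commute.one_left _))
    refine (((hasDerivAt_pow_succ_of_commute ((hasDerivAt_exp_smul_const x t).sub_const 1)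
      hcomm k)).const_smul ((-1 : 𝕂) ^ k / (k + 1))).congr_deriv ?_
    show _ = (-(exp (t • x) - 1)) ^ k * (exp (t • x) * x)
    rw [← Nat.cast_smul_eq_nsmul 𝕂, smul_smul, ← neg_one_smul 𝕂 (exp (t • x) - 1), smul_pow,
      smul_mul_assoc]
    congr 1
    push_cast
    field_simp
  have hg'_le : ∀ k, ∀ t ∈ S, ‖g' k t‖ ≤ q ^ k * (Real.exp (ρ * ‖x‖) * ‖x‖) := fun k t ht =>
    calc ‖g' k t‖ ≤ ‖exp (t • x) - 1‖ ^ k * (‖exp (t • x)‖ * ‖x‖) := by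
          refine (norm_mul_le _ _).trans ?_
          rw [← norm_neg (exp (t • x) - 1)]
          exact mul_le_mul (norm_pow_le _ k) (norm_mul_le _ _) (norm_nonneg _)
            (by positivity)
      _ ≤ q ^ k * (Real.exp (ρ * ‖x‖) * ‖x‖) :=
          mul_le_mul (pow_le_pow_left₀ (norm_nonneg _) (hS t ht).1 k)
            (mul_le_mul_of_nonneg_right (hS t ht).2 (norm_nonneg _)) (by positivity)
            (pow_nonneg hq₀ k)
  have hg'_sum : ∀ t ∈ S, ∑' k, g' k t = x := by
    intro t ht
    have hlt : ‖-(exp (t • x) - 1)‖ < 1 := by rw [norm_neg]; linarith [(hS t ht).1]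
    have hgeom := geom_series_mul_neg _ hlt
    rw [sub_neg_eq_add, add_sub_cancel] at hgeom
    show ∑' k, (-(exp (t • x) - 1)) ^ k * (exp (t • x) * x) = x
    rw [(summable_geometric_of_norm_lt_one hlt).tsum_mul_right, ← mul_assoc, hgeom, one_mul]
  have hderiv : ∀ t ∈ S, HasDerivAt (fun s => ∑' k, g k s - s • x) 0 t := by
    intro t ht
    have := (hasDerivAt_tsum_of_isPreconnected
      ((summable_geometric_of_lt_one hq₀ hq).mul_right _) Metric.isOpen_ball
      (convex_ball _ _).isPreconnected (fun k t _ => hg k t) hg'_le h0S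
      (by simp [g]) ht).sub ((hasDerivAt_id t).smul_const x)
    rwa [hg'_sum t ht, one_smul, sub_self] at this
  have h := (convex_ball (0 : 𝕂) ρ).norm_image_sub_le_of_norm_hasDerivWithin_le
    (fun t ht => (hderiv t ht).hasDerivWithinAt) (fun _ _ => le_of_eq norm_zero) h0S h1S
  simpa [g, sub_eq_zero, logSeries] using h

theorem norm_logSeries_exp_mul_exp_sub_sub_le [NormOneClass 𝔸] {a b : 𝔸}
    (hab : ‖a‖ + ‖b‖ ≤ 1 / 4) :
    ‖logSeries 𝕂 (exp a * exp b) - a - b‖ ≤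
      2 * Real.exp (2 * (‖a‖ + ‖b‖)) * ‖a * b - b * a‖ := by
  have hexp : Real.exp (‖a‖ + ‖b‖) - 1 ≤ 1 / 2 := by
    have hs : 0 ≤ ‖a‖ + ‖b‖ := by positivity
    have := Real.abs_exp_sub_one_le (x := ‖a‖ + ‖b‖) (by rw [abs_of_nonneg hs]; linarith)
    rw [abs_of_nonneg hs, abs_of_nonneg (by linarith [Real.add_one_le_exp (‖a‖ + ‖b‖)])] at this
    linarith
  have hlog : logSeries 𝕂 (exp (a + b)) = a + b :=
    logSeries_exp 𝕂 (by linarith [norm_add_le a b, Real.log_two_gt_d9])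
  have hab₁ : ‖exp a * exp b - 1‖ ≤ 1 / 2 := (norm_exp_mul_exp_sub_one_le 𝕂 a b).trans hexp
  have hab₂ : ‖exp (a + b) - 1‖ ≤ 1 / 2 :=
    (norm_exp_sub_one_le 𝕂 _).trans
      ((sub_le_sub_right (Real.exp_le_exp.2 (norm_add_le a b)) 1).trans hexp)
  calc ‖logSeries 𝕂 (exp a * exp b) - a - b‖
      = ‖logSeries 𝕂 (exp a * exp b) - logSeries 𝕂 (exp (a + b))‖ := by rw [hlog, sub_sub]
    _ ≤ (1 - 1 / 2)⁻¹ * ‖exp a * exp b - exp (a + b)‖ :=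
        norm_logSeries_sub_logSeries_le 𝕂 hab₁ hab₂ (by norm_num)
    _ ≤ 2 * (Real.exp (2 * (‖a‖ + ‖b‖)) * ‖a * b - b * a‖) := by
        norm_num only
        exact mul_le_mul_of_nonneg_left (norm_exp_mul_exp_sub_exp_add_le 𝕂 a b) zero_le_two
    _ = 2 * Real.exp (2 * (‖a‖ + ‖b‖)) * ‖a * b - b * a‖ := (mul_assoc _ _ _).symm

end Log

end NormedSpace

attribute [local instance] Matrix.linftyOpNormedRing Matrix.linftyOpNormedAlgebra

/-- For every `N ≥ 1` there is a neighbourhood `U` of `0` in `M_N(ℂ)` and a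
constant `C > 0` such that for all `A, B ∈ U`,
`‖log(e^A e^B) − A − B‖ ≤ C ‖[A,B]‖` where `[A,B] = AB − BA`. -/
theorem stmt2 (N : ℕ) (hN : 1 ≤ N) :
    ∃ U ∈ nhds (0 : Matrix (Fin N) (Fin N) ℂ), ∃ C : ℝ, 0 < C ∧
      ∀ A ∈ U, ∀ B ∈ U,
        ‖matrixLog (NormedSpace.exp A * NormedSpace.exp B) - A - B‖ ≤
          C * ‖A * B - B * A‖ := by
  have : Nonempty (Fin N) := Fin.pos_iff_nonempty.mp hN
  refine ⟨Metric.ball 0 (1 / 8), Metric.ball_mem_nhds _ (by norm_num), 2 * Real.exp 1,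
    by positivity, fun A hA B hB => ?_⟩
  rw [mem_ball_zero_iff] at hA hB
  calc _ ≤ 2 * Real.exp (2 * (‖A‖ + ‖B‖)) * ‖A * B - B * A‖ :=
        NormedSpace.norm_logSeries_exp_mul_exp_sub_sub_le ℂ (by linarith)
    _ ≤ 2 * Real.exp 1 * ‖A * B - B * A‖ := by gcongr; linarith
end

section
/- Let I = {1, …, n} and σ : I → ℝ strictly increasing. Define the tridiagonal symmetric matrix R by R_{i,i+1} = R_{i+1,i} = −1/(2(σ(i+1) − σ(i))) for 1 ≤ i < n, R_{ij} = 0 for |i − j| ≥ 2, and R_{ii} = Σ_{j≠i} |R_{ij}|. Define S : ℂ₀^I → ℂ₀^I (where ℂ₀^I is the zero-sum hyperplane) by ⟨f, S(g)⟩ = −Σ_{i,j} f_i g_j |σ(i) − σ(j)| followed by projection onto ℂ₀^I. Then R restricted to ℂ₀^I is the inverse of S; i.e. R₀ S = Id on ℂ₀^I. -/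
open scoped BigOperators

/-- The off-diagonal part of the tridiagonal matrix `R`:
`R_{i,i+1} = −1/(2(σ(i+1) − σ(i)))`, `R_{i,i−1} = −1/(2(σ(i) − σ(i−1)))`, and `0` when
`|i − j| ≥ 2`. -/
noncomputable def Roff (n : ℕ) (σ : Fin n → ℝ) : Matrix (Fin n) (Fin n) ℝ := fun i j =>
  if (j : ℕ) = (i : ℕ) + 1 then -(1 / (2 * (σ j - σ i)))
  else if (i : ℕ) = (j : ℕ) + 1 then -(1 / (2 * (σ i - σ j)))
  else 0

/-- The tridiagonal symmetric bi-L-matrix `R` with diagonal `R_{ii} = ∑_{j≠i} |R_{ij}|`. -/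
noncomputable def Rmat (n : ℕ) (σ : Fin n → ℝ) : Matrix (Fin n) (Fin n) ℝ := fun i j =>
  if i = j then ∑ k ∈ Finset.univ.erase i, |Roff n σ i k| else Roff n σ i j

/-!
`R` is the graph Laplacian of the path `0 – 1 – ⋯ – (n-1)` with edge weights
`1 / (2 (σ(i+1) - σ(i)))`, so it kills constants and `(R x)_i = ∑_j R_{ij} (x_j - x_i)`.
Along each edge the difference quotient of `j ↦ |σ j - σ k|` is `±1`, changing sign only at `k`;
hence `R · |σ - σ|` equals `-1` plus the column vector carrying `1/2` at each end of the path.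
That column times a zero-sum `g` vanishes, and the projection onto the zero-sum hyperplane only
adds a constant, which `R` kills, so `R₀ S g = g`.
-/

open Matrix

def absDiffMatrix {ι : Type*} (σ : ι → ℝ) : Matrix ι ι ℝ := Matrix.of fun i j => |σ i - σ j|

noncomputable def boundaryWeight (n : ℕ) (i : Fin n) : ℝ :=
  (if (i : ℕ) = 0 then 1 / 2 else 0) + (if (i : ℕ) + 1 = n then 1 / 2 else 0)

lemma sum_ite_val_eq {M : Type*} [AddCommMonoid M] {n : ℕ} (m : ℕ) (f : Fin n → M) :
    ∑ j : Fin n, (if (j : ℕ) = m then f j else 0) = if h : m < n then f ⟨m, h⟩ else 0 := by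
  split_ifs with h
  · rw [Finset.sum_eq_single_of_mem ⟨m, h⟩ (Finset.mem_univ _)]
    · simp
    · intro j _ hj
      rw [if_neg (fun hm => hj (Fin.ext hm))]
  · exact Finset.sum_eq_zero fun j _ => if_neg (by omega)

lemma abs_sub_sub_abs_sub {a b x : ℝ} (hab : a ≤ b) (hx : x ≤ a ∨ b ≤ x) :
    |b - x| - |a - x| = if x ≤ a then b - a else a - b := by
  split_ifs with h
  · rw [abs_of_nonneg (by linarith), abs_of_nonneg (by linarith)]; ring
  · rw [abs_of_nonpos (by linarith [hx.resolve_left h]),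
      abs_of_nonpos (by linarith [hx.resolve_left h])]
    ring

section

variable {n : ℕ} {σ : Fin n → ℝ}

lemma Roff_self (i : Fin n) : Roff n σ i i = 0 := by
  simp [Roff]

lemma Roff_symm (i j : Fin n) : Roff n σ j i = Roff n σ i j := by
  unfold Roff
  split_ifs <;> first | rfl | omega

lemma Roff_of_succ {p q : Fin n} (hpq : (q : ℕ) = p + 1) :
    Roff n σ p q = -(1 / (2 * (σ q - σ p))) := by
  simp [Roff, hpq]

lemma abs_Roff (hσ : StrictMono σ) (i j : Fin n) : |Roff n σ i j| = -Roff n σ i j := by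
  refine abs_of_nonpos ?_
  unfold Roff
  split_ifs with h₁ h₂
  · have : σ i < σ j := hσ (Fin.lt_def.mpr (by omega))
    exact neg_nonpos.mpr (one_div_pos.mpr (by linarith)).le
  · have : σ j < σ i := hσ (Fin.lt_def.mpr (by omega))
    exact neg_nonpos.mpr (one_div_pos.mpr (by linarith)).le
  · rfl

lemma Rmat_mulVec_apply (hσ : StrictMono σ) (x : Fin n → ℝ) (i : Fin n) :
    (Rmat n σ *ᵥ x) i = ∑ j, Roff n σ i j * (x j - x i) := by
  have hdiag : Rmat n σ i i = -∑ j, Roff n σ i j := by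
    rw [← Finset.sum_erase _ (Roff_self i), ← Finset.sum_neg_distrib]
    simp only [Rmat, if_true, abs_Roff hσ]
  have hoff : ∀ j ∈ Finset.univ.erase i, Rmat n σ i j = Roff n σ i j := fun j hj =>
    if_neg (Finset.ne_of_mem_erase hj).symm
  rw [mulVec, dotProduct, ← Finset.add_sum_erase _ _ (Finset.mem_univ i),
    Finset.sum_congr rfl (fun j hj => by rw [hoff j hj]), hdiag,
    Finset.sum_erase _ (by rw [Roff_self, zero_mul]), neg_mul, Finset.sum_mul]
  simp only [mul_sub, Finset.sum_sub_distrib]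
  ring

lemma sum_Rmat_row (hσ : StrictMono σ) (i : Fin n) : ∑ j, Rmat n σ i j = 0 := by
  simpa [mulVec, dotProduct] using Rmat_mulVec_apply hσ (fun _ => 1) i

lemma sum_Roff_mul (y : Fin n → ℝ) (i : Fin n) :
    ∑ j, Roff n σ i j * y j =
      (if h : (i : ℕ) + 1 < n then Roff n σ i ⟨i + 1, h⟩ * y ⟨i + 1, h⟩ else 0) +
      (if 0 < (i : ℕ) then Roff n σ i ⟨i - 1, by omega⟩ * y ⟨i - 1, by omega⟩ else 0) := by
  have hsplit : ∀ j, Roff n σ i j * y j =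
      (if (j : ℕ) = i + 1 then Roff n σ i j * y j else 0) +
      (if (i : ℕ) = j + 1 then Roff n σ i j * y j else 0) := by
    intro j
    split_ifs with h₁ h₂ <;> first | omega | simp [Roff, *]
  rw [Finset.sum_congr rfl fun j _ => hsplit j, Finset.sum_add_distrib, sum_ite_val_eq]
  congr 1
  split_ifs with hi
  · simp_rw [show ∀ j : Fin n, (i : ℕ) = j + 1 ↔ (j : ℕ) = i - 1 by omega]
    rw [sum_ite_val_eq, dif_pos (by omega)]
  · exact Finset.sum_eq_zero fun j _ => if_neg (by omega)

lemma Roff_succ_mul_abs_sub_sub_abs_sub (hσ : StrictMono σ) {p q : Fin n} (hpq : (q : ℕ) = p + 1)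
    (k : Fin n) :
    Roff n σ p q * (|σ q - σ k| - |σ p - σ k|) = if k ≤ p then -1 / 2 else 1 / 2 := by
  have hlt : σ p < σ q := hσ (Fin.lt_def.mpr (by omega))
  have hk : σ k ≤ σ p ∨ σ q ≤ σ k := by
    simp only [hσ.le_iff_le, Fin.le_def]; omega
  rw [Roff_of_succ hpq, abs_sub_sub_abs_sub hlt.le hk]
  have : σ q - σ p ≠ 0 := by linarith
  simp only [hσ.le_iff_le]
  split_ifs
  · field_simp
  · field_simp; ring

lemma Roff_pred_mul_abs_sub_sub_abs_sub (hσ : StrictMono σ) {p q : Fin n} (hpq : (q : ℕ) = p + 1)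
    (k : Fin n) :
    Roff n σ q p * (|σ p - σ k| - |σ q - σ k|) = if k ≤ p then 1 / 2 else -1 / 2 := by
  rw [Roff_symm, ← neg_sub, mul_neg, Roff_succ_mul_abs_sub_sub_abs_sub hσ hpq]
  split_ifs <;> norm_num

lemma Rmat_mul_absDiffMatrix (hσ : StrictMono σ) :
    Rmat n σ * absDiffMatrix σ = replicateCol (Fin n) (boundaryWeight n) - 1 := by
  ext i k
  change (Rmat n σ *ᵥ fun j => |σ j - σ k|) i = _
  rw [Rmat_mulVec_apply hσ, sum_Roff_mul]
  have hsucc (h : (i : ℕ) + 1 < n) := Roff_succ_mul_abs_sub_sub_abs_sub hσ (q := ⟨i + 1, h⟩) rfl k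
  have hpred (h : 0 < (i : ℕ)) :=
    Roff_pred_mul_abs_sub_sub_abs_sub hσ (p := ⟨i - 1, by omega⟩) (q := i) (by simp; omega) k
  simp +contextual only [hsucc, hpred, dite_eq_ite, boundaryWeight, Matrix.sub_apply,
    replicateCol_apply, one_apply, Fin.ext_iff, Fin.le_def]
  split_ifs <;> first | omega | norm_num

end

theorem stmt11_general (n : ℕ) (σ : Fin n → ℝ) (hσ : StrictMono σ) :
    ∀ g : Fin n → ℂ, (∑ i, g i = 0) →
      ((Rmat n σ).map (Complex.ofReal : ℝ → ℂ)).mulVec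
        (fun i => (-∑ j, (|σ i - σ j| : ℝ) * g j) -
          (∑ k, -∑ j, ((|σ k - σ j| : ℝ) : ℂ) * g j) / (n : ℂ)) = g := by
  intro g hg
  set c := (∑ k, -∑ j, ((|σ k - σ j| : ℝ) : ℂ) * g j) / (n : ℂ)
  have hRS : (Rmat n σ).map Complex.ofReal * (absDiffMatrix σ).map Complex.ofReal =
      (replicateCol (Fin n) (boundaryWeight n) - 1).map Complex.ofReal := by
    rw [← Rmat_mul_absDiffMatrix hσ]
    exact (Matrix.map_mul (f := Complex.ofRealHom)).symm
  have hconst : (Rmat n σ).map Complex.ofReal *ᵥ (fun _ => c) = 0 := by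
    ext i
    simp [mulVec, dotProduct, ← Finset.sum_mul, ← Complex.ofReal_sum, sum_Rmat_row hσ]
  have hv : (fun i => (-∑ j, (|σ i - σ j| : ℝ) * g j) - c) =
      -((absDiffMatrix σ).map Complex.ofReal *ᵥ g) - fun _ => c := rfl
  rw [hv, mulVec_sub, mulVec_neg, mulVec_mulVec, hRS, hconst, sub_zero]
  ext i
  simp [mulVec, dotProduct, sub_mul, Finset.sum_sub_distrib, ← Finset.mul_sum, hg, one_apply,
    apply_ite Complex.ofReal]

/-- Let `σ : {1,…,n} → ℝ` be strictly increasing, `R` the tridiagonal symmetric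
bi-L-matrix above, and `S : ℂ₀ → ℂ₀` defined by `⟨f, S g⟩ = −∑_{i,j} f_i g_j |σ(i) − σ(j)|`
followed by projection onto the zero-sum hyperplane `ℂ₀`.  Then the restriction `R₀` of `R` to
`ℂ₀` is the inverse of `S`: `R₀ S = Id` on `ℂ₀`. -/
theorem stmt11 (n : ℕ) (hn : 0 < n) (σ : Fin n → ℝ) (hσ : StrictMono σ) :
    ∀ g : Fin n → ℂ, (∑ i, g i = 0) →
      ((Rmat n σ).map (Complex.ofReal : ℝ → ℂ)).mulVec
        (fun i => (-∑ j, (|σ i - σ j| : ℝ) * g j) -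
          (∑ k, -∑ j, ((|σ k - σ j| : ℝ) : ℂ) * g j) / (n : ℂ)) = g :=
  stmt11_general n σ hσ
end
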